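/- Let f: ℝ^m × ℝ^n → ℝ be differentiable with L-Lipschitz gradient on a convex set, and consider alternating proximal updates Θ^{k+1} = argmin_Θ f(A^k, Θ) + (L_Θ/2)‖Θ − Θ^k‖² and A^{k+1} = argmin_A f(A, Θ^{k+1}) + (L_A/2)‖A − A^k‖², with L_Θ, L_A ≥ γ' > 0. Then f(A^k, Θ^k) − f(A^{k+1}, Θ^{k+1}) ≥ (γ'/2)(‖Θ^{k+1} − Θ^k‖² + ‖A^{k+1} − A^k‖²). -/

import Mathlib

theorem half_mul_norm_sub_sq_le_sub_of_proxMin {E : Type*} [SeminormedAddCommGroup E]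
    {g : E → ℝ} {γ L : ℝ} {x₀ x : E} (hγL : γ ≤ L)
    (hmin : ∀ y, g x + L / 2 * ‖x - x₀‖ ^ 2 ≤ g y + L / 2 * ‖y - x₀‖ ^ 2) :
    γ / 2 * ‖x - x₀‖ ^ 2 ≤ g x₀ - g x := by
  have hstay := hmin x₀
  rw [sub_self, norm_zero] at hstay
  nlinarith [mul_le_mul_of_nonneg_right hγL (sq_nonneg ‖x - x₀‖)]

theorem stmt_17_general (m n : ℕ)
    (f : EuclideanSpace ℝ (Fin m) → EuclideanSpace ℝ (Fin n) → ℝ)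
    (LΘ LA γ' : ℝ) (hLΘ : γ' ≤ LΘ) (hLA : γ' ≤ LA)
    (A : ℕ → EuclideanSpace ℝ (Fin m))
    (Θ : ℕ → EuclideanSpace ℝ (Fin n))
    (hΘmin : ∀ k, ∀ Θ' : EuclideanSpace ℝ (Fin n),
      f (A k) (Θ (k + 1)) + LΘ / 2 * ‖Θ (k + 1) - Θ k‖ ^ 2
        ≤ f (A k) Θ' + LΘ / 2 * ‖Θ' - Θ k‖ ^ 2)
    (hAmin : ∀ k, ∀ A' : EuclideanSpace ℝ (Fin m),
      f (A (k + 1)) (Θ (k + 1)) + LA / 2 * ‖A (k + 1) - A k‖ ^ 2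
        ≤ f A' (Θ (k + 1)) + LA / 2 * ‖A' - A k‖ ^ 2) :
    ∀ k, f (A k) (Θ k) - f (A (k + 1)) (Θ (k + 1))
      ≥ γ' / 2 * (‖Θ (k + 1) - Θ k‖ ^ 2 + ‖A (k + 1) - A k‖ ^ 2) := by
  intro k
  have hΘstep := half_mul_norm_sub_sq_le_sub_of_proxMin (g := f (A k)) hLΘ (hΘmin k)
  have hAstep := half_mul_norm_sub_sq_le_sub_of_proxMin
    (g := fun A' => f A' (Θ (k + 1))) hLA (hAmin k)
  linarith

theorem stmt_17 (m n : ℕ)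
    (f : EuclideanSpace ℝ (Fin m) → EuclideanSpace ℝ (Fin n) → ℝ)
    (Lf : ℝ)
    (hdiff : Differentiable ℝ
      (fun p : EuclideanSpace ℝ (Fin m) × EuclideanSpace ℝ (Fin n) =>
        f p.1 p.2))
    (hgradA : ∀ Θ, LipschitzWith (Real.toNNReal Lf)
      (gradient (fun A => f A Θ)))
    (hgradΘ : ∀ A, LipschitzWith (Real.toNNReal Lf)
      (gradient (fun Θ => f A Θ)))
    (LΘ LA γ' : ℝ) (hγ' : 0 < γ') (hLΘ : γ' ≤ LΘ) (hLA : γ' ≤ LA)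
    (A : ℕ → EuclideanSpace ℝ (Fin m))
    (Θ : ℕ → EuclideanSpace ℝ (Fin n))
    (hΘmin : ∀ k, ∀ Θ' : EuclideanSpace ℝ (Fin n),
      f (A k) (Θ (k + 1)) + LΘ / 2 * ‖Θ (k + 1) - Θ k‖ ^ 2
        ≤ f (A k) Θ' + LΘ / 2 * ‖Θ' - Θ k‖ ^ 2)
    (hAmin : ∀ k, ∀ A' : EuclideanSpace ℝ (Fin m),
      f (A (k + 1)) (Θ (k + 1)) + LA / 2 * ‖A (k + 1) - A k‖ ^ 2
        ≤ f A' (Θ (k + 1)) + LA / 2 * ‖A' - A k‖ ^ 2) :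
    ∀ k, f (A k) (Θ k) - f (A (k + 1)) (Θ (k + 1))
      ≥ γ' / 2 * (‖Θ (k + 1) - Θ k‖ ^ 2 + ‖A (k + 1) - A k‖ ^ 2) :=
  stmt_17_general m n f LΘ LA γ' hLΘ hLA A Θ hΘmin hAmin
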